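/- (Salem–Zygmund sign choice) Let (c_k)_{k=0}^N be complex numbers and S_n^ε(x) = Σ_{k=0}^n ε_k c_k e^{2πi k x} for signs ε_k = ±1. Then there exist a universal constant C and a choice of signs ε such that for every 0 ≤ n ≤ N, ‖S_n^ε‖_{L^∞(𝕋)} ≤ C (log(n+2))^{1/2} (Σ_{j=0}^n |c_j|^2)^{1/2}. -/

import Mathlib

/-!
With independent random signs, `S_n(x)` is a Rademacher sum of variance
`σ_n ^ 2 = ∑_{k ≤ n} ‖c_k‖ ^ 2`, so by Hoeffding's inequality (for the real and imaginary
parts) `‖S_n(x)‖ > 6 σ_n √(log (n + 2))` has probability at most `4 (n + 2) ^ (-9)`.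
Since `S_n` is `2π n (n + 1) σ_n`-Lipschitz, bounding it on the grid `j / (8 (n + 1) ^ 2)`
bounds it everywhere up to an error `σ_n`. The union bound over `n ≤ N` and the grid costs
`∑ 32 (n + 1) ^ 2 (n + 2) ^ (-9) ≤ ∑ 1 / ((n + 1) (n + 2)) < 1`, so some sign choice is good.
Probabilities are proportions of sign vectors `Fin (N + 1) → Bool`.
-/

open Real Finset

noncomputable section

def boolSign (b : Bool) : ℝ := if b then 1 else -1

lemma boolSign_eq_one_or_eq_neg_one (b : Bool) : boolSign b = 1 ∨ boolSign b = -1 := by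
  cases b <;> simp [boolSign]

section Hoeffding

variable {ι : Type*} [Fintype ι] [DecidableEq ι]

lemma sum_exp_sum_boolSign_mul (a : ι → ℝ) :
    ∑ s : ι → Bool, exp (∑ k, boolSign (s k) * a k) = ∏ k, 2 * cosh (a k) := by
  simp_rw [Real.exp_sum]
  rw [← Fintype.prod_sum fun k (y : Bool) => exp (boolSign y * a k)]
  refine prod_congr rfl fun k _ => ?_
  rw [Fintype.sum_bool, cosh_eq]
  simp only [boolSign, if_true, Bool.false_eq_true, if_false, one_mul, neg_one_mul]
  ring

lemma sum_exp_sum_boolSign_mul_le (a : ι → ℝ) :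
    ∑ s : ι → Bool, exp (∑ k, boolSign (s k) * a k)
      ≤ 2 ^ Fintype.card ι * exp ((∑ k, a k ^ 2) / 2) := by
  rw [sum_exp_sum_boolSign_mul, sum_div, Real.exp_sum, ← Finset.card_univ, ← prod_const,
    ← prod_mul_distrib]
  gcongr with k
  exact cosh_le_exp_half_sq (a k)

lemma card_lt_sum_boolSign_mul_le (b : ι → ℝ) {σ t : ℝ} (hσ : 0 ≤ σ) (ht : 0 ≤ t)
    (hb : ∑ k, b k ^ 2 ≤ σ ^ 2) :
    (#{s : ι → Bool | t * σ < ∑ k, boolSign (s k) * b k} : ℝ)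
      ≤ 2 ^ Fintype.card ι * exp (-(t ^ 2 / 2)) := by
  rcases hσ.eq_or_lt with rfl | hσ
  · have h0 : ∑ k, b k ^ 2 = 0 := le_antisymm (by simpa using hb) (by positivity)
    have hb0 : ∀ k, b k = 0 := fun k => by
      simpa using (sum_eq_zero_iff_of_nonneg fun k _ => sq_nonneg (b k)).mp h0 k (mem_univ k)
    simp only [hb0, mul_zero, sum_const_zero, lt_self_iff_false, filter_false, card_empty,
      Nat.cast_zero]
    positivity
  set l := t / σ
  have hl : 0 ≤ l := div_nonneg ht hσ.le
  have hlσ : l * σ = t := div_mul_cancel₀ t hσ.ne'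
  have hlin : ∀ s : ι → Bool,
      ∑ k, boolSign (s k) * (l * b k) = l * ∑ k, boolSign (s k) * b k := fun s => by
    rw [mul_sum]; simp_rw [mul_left_comm]
  -- Chernoff: on the event `t σ < X` we have `1 ≤ exp (l X - t ^ 2)`, since `t ^ 2 = l t σ`
  calc (#{s : ι → Bool | t * σ < ∑ k, boolSign (s k) * b k} : ℝ)
      ≤ ∑ s : ι → Bool, exp (∑ k, boolSign (s k) * (l * b k) - t ^ 2) := by
        rw [card_filter, Nat.cast_sum]
        refine sum_le_sum fun s _ => ?_
        split_ifs with h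
        · refine Nat.cast_one.trans_le (one_le_exp (sub_nonneg.mpr ?_))
          calc t ^ 2 = l * (t * σ) := by rw [← hlσ]; ring
            _ ≤ _ := by rw [hlin]; gcongr
        · rw [Nat.cast_zero]; positivity
    _ = (∑ s : ι → Bool, exp (∑ k, boolSign (s k) * (l * b k))) * exp (-t ^ 2) := by
        rw [sum_mul]; simp_rw [← exp_add, sub_eq_add_neg]
    _ ≤ 2 ^ Fintype.card ι * exp ((∑ k, (l * b k) ^ 2) / 2) * exp (-t ^ 2) := by
        gcongr; exact sum_exp_sum_boolSign_mul_le _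
    _ ≤ 2 ^ Fintype.card ι * exp (-(t ^ 2 / 2)) := by
        rw [mul_assoc, ← exp_add]
        gcongr
        have : ∑ k, (l * b k) ^ 2 ≤ t ^ 2 := by
          simp_rw [mul_pow, ← mul_sum, ← hlσ, mul_pow]
          gcongr
        linarith

lemma card_lt_abs_sum_boolSign_mul_le (b : ι → ℝ) {σ t : ℝ} (hσ : 0 ≤ σ) (ht : 0 ≤ t)
    (hb : ∑ k, b k ^ 2 ≤ σ ^ 2) :
    (#{s : ι → Bool | t * σ < |∑ k, boolSign (s k) * b k|} : ℝ)
      ≤ 2 * 2 ^ Fintype.card ι * exp (-(t ^ 2 / 2)) := by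
  have hneg : ∀ s : ι → Bool, -∑ k, boolSign (s k) * b k = ∑ k, boolSign (s k) * -b k := by
    simp
  simp_rw [lt_abs, filter_or, hneg]
  calc _ ≤ (#{s : ι → Bool | t * σ < ∑ k, boolSign (s k) * b k} : ℝ)
        + #{s : ι → Bool | t * σ < ∑ k, boolSign (s k) * -b k} := by
        exact_mod_cast card_union_le _ _
    _ ≤ _ := by
        have := card_lt_sum_boolSign_mul_le b hσ ht hb
        have := card_lt_sum_boolSign_mul_le (-b ·) hσ ht (by simpa using hb)
        linarith

lemma card_lt_norm_sum_boolSign_mul_le (b : ι → ℂ) {σ t : ℝ} (hσ : 0 ≤ σ) (ht : 0 ≤ t)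
    (hb : ∑ k, ‖b k‖ ^ 2 ≤ σ ^ 2) :
    (#{s : ι → Bool | t * σ < ‖∑ k, (boolSign (s k) : ℂ) * b k‖} : ℝ)
      ≤ 4 * 2 ^ Fintype.card ι * exp (-(t ^ 2 / 4)) := by
  set u := t / √2
  have hu : 0 ≤ u := by positivity
  have hu2 : u ^ 2 / 2 = t ^ 2 / 4 := by
    rw [div_pow, sq_sqrt zero_le_two]; ring
  have hre : ∑ k, (b k).re ^ 2 ≤ σ ^ 2 := hb.trans' <| sum_le_sum fun k _ => by
    rw [← sq_abs]; gcongr; exact Complex.abs_re_le_norm _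
  have him : ∑ k, (b k).im ^ 2 ≤ σ ^ 2 := hb.trans' <| sum_le_sum fun k _ => by
    rw [← sq_abs]; gcongr; exact Complex.abs_im_le_norm _
  have hsub : ∀ s : ι → Bool, t * σ < ‖∑ k, (boolSign (s k) : ℂ) * b k‖ →
      u * σ < |∑ k, boolSign (s k) * (b k).re| ∨
        u * σ < |∑ k, boolSign (s k) * (b k).im| := by
    intro s hs
    set z := ∑ k, (boolSign (s k) : ℂ) * b k
    have hz_re : z.re = ∑ k, boolSign (s k) * (b k).re := by simp [z, Complex.re_sum]
    have hz_im : z.im = ∑ k, boolSign (s k) * (b k).im := by simp [z, Complex.im_sum]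
    rw [← hz_re, ← hz_im, ← lt_max_iff]
    have : t * σ = √2 * (u * σ) := by
      rw [← mul_assoc, mul_div_cancel₀ _ (by positivity)]
    rw [this] at hs
    exact lt_of_mul_lt_mul_left (hs.trans_le (Complex.norm_le_sqrt_two_mul_max z)) (by positivity)
  calc _ ≤ (#{s : ι → Bool | u * σ < |∑ k, boolSign (s k) * (b k).re|} : ℝ)
        + #{s : ι → Bool | u * σ < |∑ k, boolSign (s k) * (b k).im|} := by
        norm_cast
        refine (card_le_card (monotone_filter_right _ fun s _ => hsub s)).trans ?_
        rw [filter_or]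
        exact card_union_le _ _
    _ ≤ _ := by
        have := card_lt_abs_sum_boolSign_mul_le _ hσ hu hre
        have := card_lt_abs_sum_boolSign_mul_le _ hσ hu him
        rw [hu2] at *
        linarith

end Hoeffding

def trigSum (a : ℕ → ℂ) (n : ℕ) (x : ℝ) : ℂ :=
  ∑ k ∈ range (n + 1), a k * Complex.exp (2 * π * Complex.I * k * x)

lemma trigSum_periodic (a : ℕ → ℂ) (n : ℕ) : Function.Periodic (trigSum a n) 1 := by
  intro x
  refine sum_congr rfl fun k _ => ?_
  rw [show 2 * π * Complex.I * k * ((x + 1 : ℝ) : ℂ)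
      = 2 * π * Complex.I * k * x + k * (2 * π * Complex.I) by push_cast; ring,
    Complex.exp_add, Complex.exp_nat_mul_two_pi_mul_I, mul_one]

lemma trigSum_fract (a : ℕ → ℂ) (n : ℕ) (x : ℝ) :
    trigSum a n (Int.fract x) = trigSum a n x := by
  rw [Int.fract, ← mul_one (⌊x⌋ : ℝ)]
  exact (trigSum_periodic a n).sub_int_mul_eq _

lemma norm_cexp_two_pi_I_mul_sub_le (k : ℕ) (x y : ℝ) :
    ‖Complex.exp (2 * π * Complex.I * k * x) - Complex.exp (2 * π * Complex.I * k * y)‖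
      ≤ 2 * π * k * |x - y| := by
  have : Complex.exp (2 * π * Complex.I * k * x) - Complex.exp (2 * π * Complex.I * k * y)
      = Complex.exp (2 * π * Complex.I * k * y)
        * (Complex.exp (Complex.I * (2 * π * k * (x - y) : ℝ)) - 1) := by
    rw [mul_sub, ← Complex.exp_add, mul_one]; push_cast; ring_nf
  have hnorm : ‖Complex.exp (2 * π * Complex.I * k * y)‖ = 1 := by simp [Complex.norm_exp]
  rw [this, norm_mul, hnorm, one_mul]
  refine norm_exp_I_mul_ofReal_sub_one_le.trans_eq ?_
  rw [Real.norm_eq_abs, abs_mul, abs_of_nonneg (by positivity)]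

lemma norm_trigSum_sub_le (a : ℕ → ℂ) (n : ℕ) (x y : ℝ) :
    ‖trigSum a n x - trigSum a n y‖
      ≤ 2 * π * n * |x - y| * ∑ k ∈ range (n + 1), ‖a k‖ := by
  rw [trigSum, trigSum, ← sum_sub_distrib, mul_sum]
  refine (norm_sum_le _ _).trans (sum_le_sum fun k hk => ?_)
  have hkn : (k : ℝ) ≤ n := by exact_mod_cast mem_range_succ_iff.mp hk
  rw [← mul_sub, norm_mul, mul_comm]
  gcongr
  exact (norm_cexp_two_pi_I_mul_sub_le k x y).trans (by gcongr)

lemma exists_norm_trigSum_sub_grid_le (a : ℕ → ℂ) (n : ℕ) (x : ℝ) {M : ℕ} (hM : 0 < M) :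
    ∃ j < M, ‖trigSum a n x - trigSum a n (j / M)‖
      ≤ 2 * π * n / M * ∑ k ∈ range (n + 1), ‖a k‖ := by
  have hM' : (0 : ℝ) < M := by exact_mod_cast hM
  set y := Int.fract x
  have hy : 0 ≤ M * y := by positivity
  refine ⟨⌊M * y⌋₊, ?_, ?_⟩
  · rw [Nat.floor_lt hy]
    simpa using mul_lt_mul_of_pos_left (Int.fract_lt_one x) hM'
  · have hdist : |y - ⌊M * y⌋₊ / M| ≤ 1 / M := by
      have hj := Nat.floor_le hy
      have hj' := Nat.lt_floor_add_one (M * y)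
      rw [show y - ⌊M * y⌋₊ / M = (M * y - ⌊M * y⌋₊) / M by field_simp, abs_div,
        abs_of_nonneg (sub_nonneg.mpr hj), Nat.abs_cast]
      gcongr
      linarith
    rw [← trigSum_fract]
    refine (norm_trigSum_sub_le a n _ _).trans ?_
    rw [← mul_one_div (2 * π * n)]
    gcongr

lemma exists_forall_not_of_sum_card_lt {α β : Type*} [Fintype α] (t : Finset β)
    (P : β → α → Prop) [∀ i, DecidablePred (P i)]
    (h : ∑ i ∈ t, (#{a | P i a} : ℝ) < Fintype.card α) : ∃ a, ∀ i ∈ t, ¬ P i a := by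
  classical
  by_contra! hall
  have hcover : (univ : Finset α) ⊆ t.biUnion fun i => {a | P i a} := fun a _ => by
    obtain ⟨i, hi, ha⟩ := hall a
    exact mem_biUnion.mpr ⟨i, hi, mem_filter.mpr ⟨mem_univ a, ha⟩⟩
  have := (card_le_card hcover).trans card_biUnion_le
  rw [card_univ] at this
  exact h.not_ge (by exact_mod_cast this)

lemma sum_range_one_div_mul_succ (K : ℕ) :
    ∑ n ∈ range K, (1 : ℝ) / ((n + 1) * (n + 2)) = K / (K + 1) := by
  induction K with
  | zero => simp
  | succ K ih =>
    rw [sum_range_succ, ih]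
    push_cast
    field_simp
    ring

lemma sum_fin_ite_le_eq_sum_range {M : Type*} [AddCommMonoid M] (f : ℕ → M) {n N : ℕ}
    (hn : n ≤ N) :
    ∑ k : Fin (N + 1), (if (k : ℕ) ≤ n then f k else 0) = ∑ k ∈ range (n + 1), f k := by
  rw [Fin.sum_univ_eq_sum_range (fun k => if k ≤ n then f k else 0), ← sum_filter]
  congr 1
  ext k
  simp only [mem_filter, mem_range]
  omega

def signSeq {N : ℕ} (s : Fin (N + 1) → Bool) (k : ℕ) : ℝ :=
  if h : k < N + 1 then boolSign (s ⟨k, h⟩) else 1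

lemma signSeq_eq_one_or_eq_neg_one {N : ℕ} (s : Fin (N + 1) → Bool) (k : ℕ) :
    signSeq s k = 1 ∨ signSeq s k = -1 := by
  unfold signSeq
  split
  · exact boolSign_eq_one_or_eq_neg_one _
  · exact .inl rfl

lemma norm_signSeq_mul {N : ℕ} (s : Fin (N + 1) → Bool) (k : ℕ) (z : ℂ) :
    ‖(signSeq s k : ℂ) * z‖ = ‖z‖ := by
  rcases signSeq_eq_one_or_eq_neg_one s k with h | h <;> simp [h]

lemma trigSum_signSeq_mul {N n : ℕ} (hn : n ≤ N) (s : Fin (N + 1) → Bool) (c : ℕ → ℂ)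
    (x : ℝ) :
    trigSum (fun k => signSeq s k * c k) n x
      = ∑ k : Fin (N + 1), (boolSign (s k) : ℂ)
          * if (k : ℕ) ≤ n then c k * Complex.exp (2 * π * Complex.I * k * x) else 0 := by
  rw [trigSum, ← sum_fin_ite_le_eq_sum_range _ hn]
  refine sum_congr rfl fun k _ => ?_
  simp only [signSeq, k.isLt, dite_true, mul_ite, mul_zero, mul_assoc]

lemma card_norm_trigSum_signSeq_gt_le {N n : ℕ} (hn : n ≤ N) (c : ℕ → ℂ) (x : ℝ) :
    (#{s : Fin (N + 1) → Bool | 6 * √(log (n + 2)) * √(∑ k ∈ range (n + 1), ‖c k‖ ^ 2)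
        < ‖trigSum (fun k => signSeq s k * c k) n x‖} : ℝ)
      ≤ 4 * 2 ^ (N + 1) / (n + 2) ^ 9 := by
  have hb : ∑ k : Fin (N + 1),
      ‖if (k : ℕ) ≤ n then c k * Complex.exp (2 * π * Complex.I * k * x) else 0‖ ^ 2
      ≤ √(∑ k ∈ range (n + 1), ‖c k‖ ^ 2) ^ 2 := by
    rw [sq_sqrt (by positivity), ← sum_fin_ite_le_eq_sum_range _ hn]
    refine sum_le_sum fun k _ => ?_
    split_ifs <;> simp [Complex.norm_exp]
  have hlog : 0 ≤ log (n + 2) := log_nonneg (by linarith [n.cast_nonneg (α := ℝ)])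
  have htail := card_lt_norm_sum_boolSign_mul_le _ (sqrt_nonneg _)
    (by positivity : 0 ≤ 6 * √(log (n + 2))) hb
  simp_rw [← trigSum_signSeq_mul hn] at htail
  have hexp : exp (-((6 * √(log (n + 2))) ^ 2 / 4)) = ((n + 2 : ℝ) ^ 9)⁻¹ := by
    rw [← exp_log (by positivity : (0 : ℝ) < (n + 2) ^ 9), ← exp_neg, log_pow, mul_pow,
      sq_sqrt hlog]
    congr 1
    push_cast
    ring
  rwa [Fintype.card_fin, hexp, ← div_eq_mul_inv] at htail

lemma eight_mul_sq_mul_four_div_pow_nine_le (n : ℕ) :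
    (8 * (n + 1) ^ 2 : ℝ) * (4 / (n + 2) ^ 9) ≤ 1 / ((n + 1) * (n + 2)) := by
  have hm : (2 : ℝ) ≤ n + 2 := by linarith [n.cast_nonneg (α := ℝ)]
  have h4 : ((n : ℝ) + 1) ^ 3 * (n + 2) ≤ (n + 2) ^ 4 := by
    rw [pow_succ (_ + 2)]; gcongr; linarith
  have h5 : (2 : ℝ) ^ 5 ≤ (n + 2) ^ 5 := by gcongr
  rw [mul_div_assoc', div_le_div_iff₀ (by positivity) (by positivity)]
  calc (8 * ((n : ℝ) + 1) ^ 2 * 4 * ((n + 1) * (n + 2)) : ℝ)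
        = 2 ^ 5 * ((n + 1) ^ 3 * (n + 2)) := by ring
    _ ≤ (n + 2) ^ 5 * (n + 2) ^ 4 := by gcongr
    _ = 1 * (n + 2) ^ 9 := by ring

lemma exists_signs_forall_grid_norm_trigSum_le (N : ℕ) (c : ℕ → ℂ) :
    ∃ s : Fin (N + 1) → Bool, ∀ n ≤ N, ∀ j < 8 * (n + 1) ^ 2,
      ‖trigSum (fun k => signSeq s k * c k) n (j / (8 * (n + 1) ^ 2 : ℕ))‖
        ≤ 6 * √(log (n + 2)) * √(∑ k ∈ range (n + 1), ‖c k‖ ^ 2) := by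
  set grid := (range (N + 1)).sigma fun n => range (8 * (n + 1) ^ 2)
  set bad := fun (i : Σ _ : ℕ, ℕ) (s : Fin (N + 1) → Bool) =>
    6 * √(log (i.1 + 2)) * √(∑ k ∈ range (i.1 + 1), ‖c k‖ ^ 2)
      < ‖trigSum (fun k => signSeq s k * c k) i.1 (i.2 / (8 * (i.1 + 1) ^ 2 : ℕ))‖
  have hcount : ∑ i ∈ grid, (#{s | bad i s} : ℝ) < Fintype.card (Fin (N + 1) → Bool) := by
    rw [sum_sigma, Fintype.card_fun, Fintype.card_bool, Fintype.card_fin, Nat.cast_pow,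
      Nat.cast_two]
    calc _ ≤ ∑ n ∈ range (N + 1), (2 : ℝ) ^ (N + 1) * (1 / ((n + 1) * (n + 2))) := by
          refine sum_le_sum fun n hn => ?_
          refine (sum_le_sum fun j _ =>
            card_norm_trigSum_signSeq_gt_le (mem_range_succ_iff.mp hn) c _).trans ?_
          calc _ = (2 : ℝ) ^ (N + 1) * ((8 * (n + 1) ^ 2 : ℝ) * (4 / (n + 2) ^ 9)) := by
                rw [sum_const, card_range, nsmul_eq_mul]; push_cast; ring
            _ ≤ _ := by gcongr; exact eight_mul_sq_mul_four_div_pow_nine_le n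
      _ = 2 ^ (N + 1) * ((N + 1) / (N + 2)) := by
          rw [← mul_sum, sum_range_one_div_mul_succ]; push_cast; ring
      _ < 2 ^ (N + 1) := by
          rw [mul_lt_iff_lt_one_right (by positivity), div_lt_one (by positivity)]
          linarith
  obtain ⟨s, hs⟩ := exists_forall_not_of_sum_card_lt grid bad hcount
  exact ⟨s, fun n hn j hj => not_lt.mp
    (hs ⟨n, j⟩ (mem_sigma.mpr ⟨mem_range_succ_iff.mpr hn, mem_range.mpr hj⟩))⟩

lemma norm_trigSum_le_of_forall_grid_le {a : ℕ → ℂ} {n : ℕ} {B σ : ℝ}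
    (hgrid : ∀ j < 8 * (n + 1) ^ 2, ‖trigSum a n (j / (8 * (n + 1) ^ 2 : ℕ))‖ ≤ B)
    (ha : ∀ k ≤ n, ‖a k‖ ≤ σ) (x : ℝ) : ‖trigSum a n x‖ ≤ B + σ := by
  have hσ : 0 ≤ σ := (norm_nonneg _).trans (ha 0 n.zero_le)
  obtain ⟨j, hj, hx⟩ :=
    exists_norm_trigSum_sub_grid_le a n x (M := 8 * (n + 1) ^ 2) (by positivity)
  have hsum : ∑ k ∈ range (n + 1), ‖a k‖ ≤ (n + 1) * σ := by
    simpa using sum_le_sum fun k hk => ha k (mem_range_succ_iff.mp hk)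
  have hπ : 2 * π * n * (n + 1) ≤ 8 * (n + 1) ^ 2 := by
    nlinarith [pi_le_four, pi_pos, n.cast_nonneg (α := ℝ)]
  calc ‖trigSum a n x‖
      ≤ ‖trigSum a n (j / (8 * (n + 1) ^ 2 : ℕ))‖
        + ‖trigSum a n x - trigSum a n (j / (8 * (n + 1) ^ 2 : ℕ))‖ := norm_le_insert' _ _
    _ ≤ B + 2 * π * n / (8 * (n + 1) ^ 2 : ℕ) * ((n + 1) * σ) := by
        gcongr
        · exact hgrid j hj
        · exact hx.trans (by gcongr)
    _ ≤ B + σ := by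
        gcongr
        rw [div_mul_eq_mul_div, div_le_iff₀ (by positivity)]
        push_cast
        nlinarith

lemma one_le_two_mul_sqrt_log_add_two (n : ℕ) : 1 ≤ 2 * √(log (n + 2)) := by
  have : (1 / 2 : ℝ) ≤ √(log (n + 2)) := (le_sqrt' (by norm_num)).mpr <| by
    linarith [log_two_gt_d9, log_le_log two_pos (by linarith [n.cast_nonneg (α := ℝ)] :
      (2 : ℝ) ≤ n + 2)]
  linarith

lemma norm_le_sqrt_sum_range_sq (c : ℕ → ℂ) {k n : ℕ} (hk : k ≤ n) :
    ‖c k‖ ≤ √(∑ j ∈ range (n + 1), ‖c j‖ ^ 2) :=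
  (le_sqrt (norm_nonneg _) (by positivity)).mpr
    (single_le_sum (f := fun j => ‖c j‖ ^ 2) (fun j _ => by positivity)
      (mem_range_succ_iff.mpr hk))

end

/-- Salem–Zygmund sign choice: ‖S_n^ε‖_∞ ≤ C log(n+2)^{1/2} ‖S_n‖₂
simultaneously for all n ≤ N. -/
theorem stmt17 :
    ∃ C : ℝ, ∀ (N : ℕ) (c : ℕ → ℂ),
      ∃ ε : ℕ → ℝ, (∀ k, ε k = 1 ∨ ε k = -1) ∧
        ∀ n : ℕ, n ≤ N → ∀ x : ℝ,
          ‖∑ k ∈ Finset.range (n + 1),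
              (ε k : ℂ) * c k * Complex.exp (2 * Real.pi * Complex.I * k * x)‖ ≤
            C * Real.sqrt (Real.log ((n : ℝ) + 2)) *
              Real.sqrt (∑ j ∈ Finset.range (n + 1), ‖c j‖ ^ 2) := by
  refine ⟨8, fun N c => ?_⟩
  obtain ⟨s, hs⟩ := exists_signs_forall_grid_norm_trigSum_le N c
  refine ⟨signSeq s, signSeq_eq_one_or_eq_neg_one s, fun n hn x => ?_⟩
  have hL := one_le_two_mul_sqrt_log_add_two n
  set L := √(log (n + 2))
  set σ := √(∑ k ∈ range (n + 1), ‖c k‖ ^ 2)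
  have hσ : 0 ≤ σ := sqrt_nonneg _
  have hcoef : ∀ k ≤ n, ‖(signSeq s k : ℂ) * c k‖ ≤ σ := fun k hk => by
    rw [norm_signSeq_mul]
    exact norm_le_sqrt_sum_range_sq c hk
  calc ‖trigSum (fun k => signSeq s k * c k) n x‖ ≤ 6 * L * σ + σ :=
        norm_trigSum_le_of_forall_grid_le (hs n hn) hcoef x
    _ ≤ 8 * L * σ := by nlinarith
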